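/- arXiv:quant-ph/0101003 — 5 statements merged into one kernel-verified Lean document; each statement's English description precedes it below -/
import Mathlib

section
/- A 2n×2n Hermitian block matrix M = [[A, C],[C†, B]] (with A, B, C each n×n) is positive semidefinite if and only if A ≥ 0, B ≥ 0, and there exists a matrix R with operator norm at most 1 such that C = A^{1/2} R B^{1/2}. -/
open Matrix
open scoped Matrix.Norms.L2Operator ComplexOrder

/-- The positive semidefinite square root of a positive semidefinite matrix
(the definition `Matrix.PosSemidef.sqrt` of the older Mathlib, since removed). -/
noncomputable def Matrix.PosSemidef.sqrt {n : Type*} [Fintype n] [DecidableEq n] {𝕜 : Type*}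
    [RCLike 𝕜] {A : Matrix n n 𝕜} (hA : A.PosSemidef) : Matrix n n 𝕜 :=
  hA.1.eigenvectorUnitary.1 * diagonal ((↑) ∘ (√·) ∘ hA.1.eigenvalues) *
  (star hA.1.eigenvectorUnitary : Matrix n n 𝕜)

/-!
Write the block matrix as a Gram matrix `Nᴴ * N` with `N = [X Y]`, so that `A = Xᴴ X`,
`C = Xᴴ Y` and `B = Yᴴ Y`. As `Xᴴ X = (A^{1/2})²`, the matrix `V = X (A^{1/2})⁺` is a contraction
with `X = V A^{1/2}`, where `S⁺ = cfc (·⁻¹) S` is the Moore–Penrose inverse of a Hermitian `S`;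
likewise `Y = W B^{1/2}`, and `R = Vᴴ W` works. Conversely, the block matrix built from a
contraction `R` is the congruence of `[[1, R], [Rᴴ, 1]]` by `diag(A^{1/2}, B^{1/2})`, and
`[[1, R], [Rᴴ, 1]]` is positive semidefinite because its Schur complement `1 - Rᴴ R` is.
-/

open scoped MatrixOrder

namespace Matrix

variable {m n : Type*} [Fintype m] [Fintype n]

lemma mul_eq_zero_of_conjTranspose_mul_self_eq {R l k : Type*} [CommRing R] [PartialOrder R]
    [StarRing R] [StarOrderedRing R] [NoZeroDivisors R] [Fintype l] {X : Matrix m n R}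
    {Y : Matrix l n R} (h : Xᴴ * X = Yᴴ * Y) {Z : Matrix n k R} (hZ : Y * Z = 0) : X * Z = 0 := by
  rw [← conjTranspose_mul_self_eq_zero]
  calc (X * Z)ᴴ * (X * Z) = Zᴴ * (Xᴴ * X) * Z := by simp only [conjTranspose_mul, Matrix.mul_assoc]
    _ = (Y * Z)ᴴ * (Y * Z) := by rw [h]; simp only [conjTranspose_mul, Matrix.mul_assoc]
    _ = 0 := by rw [hZ, Matrix.mul_zero]

variable [DecidableEq n]

lemma PosSemidef.sqrt_eq_cfc_sqrt {A : Matrix n n ℂ} (hA : A.PosSemidef) :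
    hA.sqrt = CFC.sqrt A := by
  rw [CFC.sqrt_eq_real_sqrt A hA.nonneg, cfcₙ_eq_cfc, hA.1.cfc_eq]
  rfl

lemma PosSemidef.posSemidef_sqrt {A : Matrix n n ℂ} (hA : A.PosSemidef) : hA.sqrt.PosSemidef :=
  hA.sqrt_eq_cfc_sqrt ▸ (CFC.sqrt_nonneg A).posSemidef

lemma PosSemidef.sqrt_mul_sqrt {A : Matrix n n ℂ} (hA : A.PosSemidef) :
    hA.sqrt * hA.sqrt = A := by
  rw [hA.sqrt_eq_cfc_sqrt, CFC.sqrt_mul_sqrt_self A hA.nonneg]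

lemma IsHermitian.mul_cfc_inv_mul_self {S : Matrix n n ℂ} (hS : S.IsHermitian) :
    S * cfc (·⁻¹ : ℝ → ℝ) S * S = S := by
  have hcont := fun f : ℝ → ℝ => S.finite_real_spectrum.continuousOn f
  have hS' : IsSelfAdjoint S := hS
  calc S * cfc (·⁻¹ : ℝ → ℝ) S * S
      = cfc (fun x : ℝ => x) S * cfc (·⁻¹ : ℝ → ℝ) S * cfc (fun x : ℝ => x) S := by
        rw [cfc_id' ℝ S]
    _ = cfc (fun x : ℝ => x * x⁻¹ * x) S := by
        rw [← cfc_mul _ _ _ (hcont _) (hcont _), ← cfc_mul _ _ _ (hcont _) (hcont _)]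
    _ = S := by
        conv_rhs => rw [← cfc_id' ℝ S]
        refine cfc_congr fun x _ => ?_
        by_cases hx : x = 0 <;> simp [hx]

lemma IsHermitian.norm_mul_cfc_inv_le_one {S : Matrix n n ℂ} (hS : S.IsHermitian) :
    ‖S * cfc (·⁻¹ : ℝ → ℝ) S‖ ≤ 1 := by
  have hcont := fun f : ℝ → ℝ => S.finite_real_spectrum.continuousOn f
  have hS' : IsSelfAdjoint S := hS
  calc ‖S * cfc (·⁻¹ : ℝ → ℝ) S‖ = ‖cfc (fun x : ℝ => x * x⁻¹) S‖ := by
        rw [cfc_mul _ _ _ (hcont _) (hcont _), cfc_id' ℝ S]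
    _ ≤ 1 := by
      refine norm_cfc_le zero_le_one fun x _ => ?_
      by_cases hx : x = 0 <;> simp [hx]

lemma l2_opNorm_eq_of_conjTranspose_mul_self_eq {l : Type*} [Fintype l] {X : Matrix m n ℂ}
    {Y : Matrix l n ℂ} (h : Xᴴ * X = Yᴴ * Y) : ‖X‖ = ‖Y‖ := by
  have hsq : ‖X‖ * ‖X‖ = ‖Y‖ * ‖Y‖ := by
    rw [← l2_opNorm_conjTranspose_mul_self, h, l2_opNorm_conjTranspose_mul_self]
  nlinarith [norm_nonneg X, norm_nonneg Y]

lemma exists_eq_contraction_mul_of_conjTranspose_mul_self_eq {X : Matrix m n ℂ}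
    {S : Matrix n n ℂ} (hS : S.IsHermitian) (h : Xᴴ * X = Sᴴ * S) :
    ∃ V : Matrix m n ℂ, ‖V‖ ≤ 1 ∧ X = V * S := by
  set P := cfc (·⁻¹ : ℝ → ℝ) S
  refine ⟨X * P, ?_, ?_⟩
  · rw [l2_opNorm_eq_of_conjTranspose_mul_self_eq (Y := S * P)]
    · exact hS.norm_mul_cfc_inv_le_one
    · simp only [conjTranspose_mul, Matrix.mul_assoc, ← Matrix.mul_assoc Xᴴ, h]
  · have hSPS : S * (P * S - 1) = 0 := by
      rw [Matrix.mul_sub, ← Matrix.mul_assoc, hS.mul_cfc_inv_mul_self, Matrix.mul_one, sub_self]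
    have := mul_eq_zero_of_conjTranspose_mul_self_eq h hSPS
    rw [Matrix.mul_sub, Matrix.mul_one, sub_eq_zero] at this
    rw [Matrix.mul_assoc, this]

lemma PosSemidef.exists_eq_gram_of_fromBlocks {A : Matrix m m ℂ} {B : Matrix n n ℂ}
    {C : Matrix m n ℂ} [DecidableEq m] (h : (fromBlocks A C Cᴴ B).PosSemidef) :
    ∃ (X : Matrix (m ⊕ n) m ℂ) (Y : Matrix (m ⊕ n) n ℂ),
      A = Xᴴ * X ∧ C = Xᴴ * Y ∧ B = Yᴴ * Y := by
  obtain ⟨N, hN⟩ := CStarAlgebra.nonneg_iff_eq_star_mul_self.mp h.nonneg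
  refine ⟨N.toCols₁, N.toCols₂, ?_⟩
  rw [← fromCols_toCols N, star_eq_conjTranspose, conjTranspose_fromCols_eq_fromRows_conjTranspose,
    fromRows_mul_fromCols, fromBlocks_inj] at hN
  exact ⟨hN.1, hN.2.1, hN.2.2.2⟩

lemma one_sub_conjTranspose_mul_self_posSemidef {R : Matrix m n ℂ} (hR : ‖R‖ ≤ 1) :
    (1 - Rᴴ * R).PosSemidef := by
  have hle : Rᴴ * R ≤ 1 := by
    rw [← CStarAlgebra.norm_le_one_iff_of_nonneg _ (posSemidef_conjTranspose_mul_self R).nonneg,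
      l2_opNorm_conjTranspose_mul_self]
    exact mul_le_one₀ hR (norm_nonneg R) hR
  exact le_iff.mp hle

lemma fromBlocks_one_posSemidef [DecidableEq m] {R : Matrix m n ℂ} (hR : ‖R‖ ≤ 1) :
    (fromBlocks 1 R Rᴴ 1).PosSemidef := by
  let := invertibleOne (α := Matrix m m ℂ)
  rw [PosDef.one.fromBlocks₁₁, inv_one, Matrix.mul_one]
  exact one_sub_conjTranspose_mul_self_posSemidef hR

lemma PosSemidef.exists_contraction_of_fromBlocks [DecidableEq m] {A : Matrix m m ℂ}
    {B : Matrix n n ℂ} {C : Matrix m n ℂ} (h : (fromBlocks A C Cᴴ B).PosSemidef) :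
    ∃ (hA : A.PosSemidef) (hB : B.PosSemidef) (R : Matrix m n ℂ),
      ‖R‖ ≤ 1 ∧ C = hA.sqrt * R * hB.sqrt := by
  obtain ⟨X, Y, rfl, rfl, rfl⟩ := h.exists_eq_gram_of_fromBlocks
  have hA := posSemidef_conjTranspose_mul_self X
  have hB := posSemidef_conjTranspose_mul_self Y
  obtain ⟨V, hV, hXV⟩ := exists_eq_contraction_mul_of_conjTranspose_mul_self_eq (X := X)
    hA.posSemidef_sqrt.1 (by rw [hA.posSemidef_sqrt.1.eq, hA.sqrt_mul_sqrt])
  obtain ⟨W, hW, hYW⟩ := exists_eq_contraction_mul_of_conjTranspose_mul_self_eq (X := Y)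
    hB.posSemidef_sqrt.1 (by rw [hB.posSemidef_sqrt.1.eq, hB.sqrt_mul_sqrt])
  refine ⟨hA, hB, Vᴴ * W, ?_, ?_⟩
  · calc ‖Vᴴ * W‖ ≤ ‖Vᴴ‖ * ‖W‖ := l2_opNorm_mul _ _
      _ ≤ 1 := by rw [l2_opNorm_conjTranspose]; exact mul_le_one₀ hV (norm_nonneg W) hW
  · conv_lhs => rw [hXV, hYW]
    rw [conjTranspose_mul, hA.posSemidef_sqrt.1.eq]
    simp only [Matrix.mul_assoc]

lemma PosSemidef.fromBlocks_sqrt_mul_mul_sqrt [DecidableEq m] {A : Matrix m m ℂ}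
    {B : Matrix n n ℂ} (hA : A.PosSemidef) (hB : B.PosSemidef) {R : Matrix m n ℂ}
    (hR : (fromBlocks 1 R Rᴴ 1).PosSemidef) :
    (fromBlocks A (hA.sqrt * R * hB.sqrt) (hA.sqrt * R * hB.sqrt)ᴴ B).PosSemidef := by
  convert hR.conjTranspose_mul_mul_same (fromBlocks hA.sqrt 0 0 hB.sqrt) using 1
  simp [fromBlocks_conjTranspose, fromBlocks_multiply, hA.sqrt_mul_sqrt, hB.sqrt_mul_sqrt,
    hA.posSemidef_sqrt.1.eq, hB.posSemidef_sqrt.1.eq, Matrix.mul_assoc]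

end Matrix

/-- A 2n×2n Hermitian block matrix `[[A, C], [Cᴴ, B]]` is positive semidefinite iff
`A ≥ 0`, `B ≥ 0`, and `C = A^{1/2} R B^{1/2}` for some contraction `R` (operator norm ≤ 1). -/
theorem block_posSemidef_iff_contraction {n : ℕ} (A B C : Matrix (Fin n) (Fin n) ℂ) :
    (Matrix.fromBlocks A C Cᴴ B).PosSemidef ↔
      ∃ (hA : A.PosSemidef) (hB : B.PosSemidef) (R : Matrix (Fin n) (Fin n) ℂ),
        ‖R‖ ≤ 1 ∧ C = hA.sqrt * R * hB.sqrt := by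
  refine ⟨PosSemidef.exists_contraction_of_fromBlocks, ?_⟩
  rintro ⟨hA, hB, R, hR, rfl⟩
  exact hA.fromBlocks_sqrt_mul_mul_sqrt hB (fromBlocks_one_posSemidef hR)
end

section
/- Let M = [[A, C],[C†, B]] be a positive semidefinite 4×4 matrix with 2×2 blocks. If rank(M) ≤ 2, then there exists a unitary 2×2 matrix U with C = A^{1/2} U B^{1/2}. -/
/-!
Being positive semidefinite of rank at most `2`, `M` is a Gram matrix `M = Xᴴ X` with `X` of size
`2 × 4`: compose `M^{1/2}` with an isometric embedding of its range into `ℂ²`. Splitting `X = [P Q]`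
into square blocks gives `A = Pᴴ P`, `B = Qᴴ Q` and `C = Pᴴ Q`. Square matrices with the same Gram
matrix differ by a unitary factor (the map `A^{1/2} x ↦ P x` is isometric on the range of `A^{1/2}`
and extends to a unitary), so `P = V₁ A^{1/2}`, `Q = V₂ B^{1/2}`, and `U = V₁ᴴ V₂` works.
-/

open Matrix
open scoped ComplexOrder

open Module
open scoped InnerProductSpace

namespace Matrix.PosSemidef

variable {𝕜 n : Type*} [RCLike 𝕜] [Fintype n] [DecidableEq n] {A : Matrix n n 𝕜}

theorem sqrt_eq_conjStarAlgAut (hA : A.PosSemidef) :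
    hA.sqrt = Unitary.conjStarAlgAut 𝕜 _ hA.1.eigenvectorUnitary
      (diagonal ((↑) ∘ (√·) ∘ hA.1.eigenvalues)) := rfl

theorem conjTranspose_sqrt (hA : A.PosSemidef) : hA.sqrtᴴ = hA.sqrt := by
  rw [← star_eq_conjTranspose, sqrt_eq_conjStarAlgAut, ← map_star, star_eq_conjTranspose,
    diagonal_conjTranspose]
  congr 2
  ext i
  simp

theorem sqrt_mul_sqrt_s3 (hA : A.PosSemidef) : hA.sqrt * hA.sqrt = A := by
  conv_rhs => rw [hA.1.spectral_theorem]
  rw [sqrt_eq_conjStarAlgAut, ← map_mul, diagonal_mul_diagonal]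
  congr! with i
  simp [← RCLike.ofReal_mul, Real.mul_self_sqrt (hA.eigenvalues_nonneg i)]

theorem conjTranspose_sqrt_mul_sqrt (hA : A.PosSemidef) : hA.sqrtᴴ * hA.sqrt = A := by
  rw [conjTranspose_sqrt, sqrt_mul_sqrt_s3]

end Matrix.PosSemidef

section InnerProductSpace

variable {𝕜 E F G : Type*} [RCLike 𝕜] [NormedAddCommGroup E] [InnerProductSpace 𝕜 E]
  [NormedAddCommGroup F] [InnerProductSpace 𝕜 F] [NormedAddCommGroup G] [InnerProductSpace 𝕜 G]

theorem LinearMap.exists_linearIsometry_comp_rangeRestrict_eq (s : E →ₗ[𝕜] F) (p : E →ₗ[𝕜] G)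
    (h : ∀ x, ‖p x‖ = ‖s x‖) :
    ∃ L : range s →ₗᵢ[𝕜] G, ∀ x, L (s.rangeRestrict x) = p x := by
  have hker : ker s ≤ ker p := fun x hx => by
    rw [mem_ker, ← norm_eq_zero, h, norm_eq_zero]
    exact hx
  let L : range s →ₗ[𝕜] G := (ker s).liftQ p hker ∘ₗ s.quotKerEquivRange.symm.toLinearMap
  have hL : ∀ x, L (s.rangeRestrict x) = p x := fun x => by
    have : s.quotKerEquivRange.symm (s.rangeRestrict x) = (ker s).mkQ x := by
      rw [LinearEquiv.symm_apply_eq]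
      rfl
    simp only [L, LinearMap.comp_apply, LinearEquiv.coe_coe, this, Submodule.mkQ_apply,
      Submodule.liftQ_apply]
  refine ⟨⟨L, ?_⟩, hL⟩
  rintro ⟨_, x, rfl⟩
  change ‖L (s.rangeRestrict x)‖ = ‖s x‖
  rw [hL, h]

theorem exists_linearIsometry_of_finrank_le [FiniteDimensional 𝕜 E] [FiniteDimensional 𝕜 F]
    (h : finrank 𝕜 E ≤ finrank 𝕜 F) : Nonempty (E →ₗᵢ[𝕜] F) := by
  let b := stdOrthonormalBasis 𝕜 E
  let c := stdOrthonormalBasis 𝕜 F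
  let f : E →ₗ[𝕜] F := b.toBasis.constr 𝕜 (c ∘ Fin.castLE h)
  have hf : f ∘ b.toBasis = c ∘ Fin.castLE h := funext (b.toBasis.constr_basis 𝕜 _)
  exact ⟨f.isometryOfOrthonormal b.orthonormal
    (hf ▸ c.orthonormal.comp _ (Fin.castLE_injective h))⟩

end InnerProductSpace

namespace Matrix

variable {𝕜 k l n : Type*} [RCLike 𝕜] [Fintype k] [Fintype l] [Fintype n] [DecidableEq n]

theorem inner_toEuclideanLin_toEuclideanLin (P : Matrix k n 𝕜) (x y : EuclideanSpace 𝕜 n) :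
    ⟪toEuclideanLin P x, toEuclideanLin P y⟫_𝕜 = ⟪x, toEuclideanLin (Pᴴ * P) y⟫_𝕜 := by
  simp only [EuclideanSpace.inner_eq_star_dotProduct, toLpLin_apply, ← mulVec_mulVec,
    star_mulVec]
  rw [dotProduct_comm (Pᴴ *ᵥ _), dotProduct_mulVec, dotProduct_comm]

theorem conjTranspose_mul_self_eq_conjTranspose_mul_self_iff {P : Matrix k n 𝕜}
    {S : Matrix l n 𝕜} :
    Pᴴ * P = Sᴴ * S ↔ ∀ x y, ⟪toEuclideanLin P x, toEuclideanLin P y⟫_𝕜 =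
      ⟪toEuclideanLin S x, toEuclideanLin S y⟫_𝕜 := by
  simp only [inner_toEuclideanLin_toEuclideanLin]
  refine ⟨fun h x y => by rw [h], fun h => toEuclideanLin.injective ?_⟩
  exact LinearMap.ext fun y => ext_inner_left 𝕜 fun x => h x y

theorem mem_unitaryGroup_of_inner_toEuclideanLin {W : Matrix n n 𝕜}
    (h : ∀ x y, ⟪toEuclideanLin W x, toEuclideanLin W y⟫_𝕜 = ⟪x, y⟫_𝕜) :
    W ∈ unitaryGroup n 𝕜 := by
  have hW : Wᴴ * W = (1 : Matrix n n 𝕜)ᴴ * 1 :=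
    conjTranspose_mul_self_eq_conjTranspose_mul_self_iff.2 fun x y => by
      simpa only [toLpLin_one, LinearMap.id_apply] using h x y
  rwa [conjTranspose_one, Matrix.one_mul, ← star_eq_conjTranspose, ← mem_unitaryGroup_iff'] at hW

theorem exists_unitary_mul_eq_of_conjTranspose_mul_self_eq [DecidableEq k]
    {P S : Matrix k n 𝕜} (h : Pᴴ * P = Sᴴ * S) : ∃ V ∈ unitaryGroup k 𝕜, P = V * S := by
  have hinner := conjTranspose_mul_self_eq_conjTranspose_mul_self_iff.1 h
  obtain ⟨L, hL⟩ := (toEuclideanLin S).exists_linearIsometry_comp_rangeRestrict_eq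
    (toEuclideanLin P) fun x => by simp only [@norm_eq_sqrt_re_inner 𝕜, hinner x x]
  set V := toEuclideanLin.symm L.extend.toLinearMap
  have hV : toEuclideanLin V = L.extend.toLinearMap := LinearEquiv.apply_symm_apply _ _
  refine ⟨V, mem_unitaryGroup_of_inner_toEuclideanLin fun x y => ?_, toEuclideanLin.injective ?_⟩
  · rw [hV]
    exact L.extend.inner_map_map x y
  · ext1 x
    rw [toLpLin_mul_same, LinearMap.comp_apply, hV, ← hL x]
    exact (L.extend_apply _).symm

theorem PosSemidef.exists_eq_conjTranspose_mul_self_of_rank_le {M : Matrix n n 𝕜}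
    (hM : M.PosSemidef) (h : M.rank ≤ Fintype.card k) : ∃ X : Matrix k n 𝕜, M = Xᴴ * X := by
  have hrank : finrank 𝕜 (LinearMap.range (toEuclideanLin hM.sqrt)) = M.rank :=
    calc _ = hM.sqrt.rank := (rank_eq_finrank_range_toLin _ (EuclideanSpace.basisFun n 𝕜).toBasis
          (EuclideanSpace.basisFun n 𝕜).toBasis).symm
      _ = (hM.sqrtᴴ * hM.sqrt).rank := (rank_conjTranspose_mul_self _).symm
      _ = M.rank := by rw [hM.conjTranspose_sqrt_mul_sqrt]
  obtain ⟨ι⟩ := exists_linearIsometry_of_finrank_le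
    (𝕜 := 𝕜) (E := LinearMap.range (toEuclideanLin hM.sqrt)) (F := EuclideanSpace 𝕜 k)
    (by rw [finrank_euclideanSpace]; exact hrank.trans_le h)
  refine ⟨toEuclideanLin.symm (ι.toLinearMap ∘ₗ (toEuclideanLin hM.sqrt).rangeRestrict), ?_⟩
  refine hM.conjTranspose_sqrt_mul_sqrt.symm.trans
    (conjTranspose_mul_self_eq_conjTranspose_mul_self_iff.2 fun x y => ?_)
  rw [LinearEquiv.apply_symm_apply, LinearMap.comp_apply, LinearMap.comp_apply,
    LinearIsometry.coe_toLinearMap, ι.inner_map_map]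
  rfl

theorem PosSemidef.exists_unitary_eq_mul_sqrt {A P : Matrix n n 𝕜} (hA : A.PosSemidef)
    (h : A = Pᴴ * P) : ∃ V ∈ unitaryGroup n 𝕜, P = V * hA.sqrt :=
  exists_unitary_mul_eq_of_conjTranspose_mul_self_eq
    (h.symm.trans hA.conjTranspose_sqrt_mul_sqrt.symm)

theorem exists_unitary_of_fromBlocks_rank_le {A B C : Matrix n n 𝕜} (hA : A.PosSemidef)
    (hB : B.PosSemidef) (hM : (fromBlocks A C Cᴴ B).PosSemidef)
    (hrank : (fromBlocks A C Cᴴ B).rank ≤ Fintype.card n) :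
    ∃ U ∈ unitaryGroup n 𝕜, C = hA.sqrt * U * hB.sqrt := by
  obtain ⟨X, hX⟩ := hM.exists_eq_conjTranspose_mul_self_of_rank_le hrank
  rw [← fromCols_toCols X, conjTranspose_fromCols_eq_fromRows_conjTranspose,
    fromRows_mul_fromCols] at hX
  obtain ⟨hA', hC, -, hB'⟩ := fromBlocks_inj.1 hX
  obtain ⟨V₁, hV₁, hP⟩ := hA.exists_unitary_eq_mul_sqrt hA'
  obtain ⟨V₂, hV₂, hQ⟩ := hB.exists_unitary_eq_mul_sqrt hB'
  refine ⟨star V₁ * V₂, mul_mem (Unitary.star_mem hV₁) hV₂, ?_⟩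
  rw [hC, hP, hQ, conjTranspose_mul, hA.conjTranspose_sqrt, star_eq_conjTranspose]
  simp only [Matrix.mul_assoc]

end Matrix

/-- If `M = [[A, C], [Cᴴ, B]]` is positive semidefinite of rank at most 2, then
`C = A^{1/2} U B^{1/2}` for some unitary `U`. -/
theorem exists_unitary_of_rank_le_two (A B C : Matrix (Fin 2) (Fin 2) ℂ)
    (hA : A.PosSemidef) (hB : B.PosSemidef)
    (hM : (Matrix.fromBlocks A C Cᴴ B).PosSemidef)
    (hrank : (Matrix.fromBlocks A C Cᴴ B).rank ≤ 2) :
    ∃ U : Matrix (Fin 2) (Fin 2) ℂ, U ∈ Matrix.unitaryGroup (Fin 2) ℂ ∧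
      C = hA.sqrt * U * hB.sqrt :=
  Matrix.exists_unitary_of_fromBlocks_rank_le hA hB hM (by simpa using hrank)
end

section
/- Let λ₁, λ₂, λ₃, t₃ be real numbers with |t₃| + |λ₃| < 1 such that the map Φ(w₀I + w·σ) = w₀I + ((0,0,t₃) + diag(λ₁,λ₂,λ₃)w)·σ is completely positive. Then (λ₁ + λ₂)² ≤ (1 + λ₃)² − t₃² and (λ₁ − λ₂)² ≤ (1 − λ₃)² − t₃². -/
/-! Complete positivity makes the Choi matrix `∑ Φ(E_ab) ⊗ E_ab` positive semidefinite. Expanding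
the matrix units in the Pauli basis, its principal `2 × 2` submatrices on the index pairs
`{(0,0), (1,1)}` and `{(0,1), (1,0)}` are
`[[(1+t₃+λ₃)/2, (λ₁+λ₂)/2], [(λ₁+λ₂)/2, (1−t₃+λ₃)/2]]` and
`[[(1+t₃−λ₃)/2, (λ₁−λ₂)/2], [(λ₁−λ₂)/2, (1−t₃−λ₃)/2]]`,
and their nonnegative determinants are the two inequalities. -/

open Matrix
open scoped ComplexOrder

noncomputable section

def sigmaX : Matrix (Fin 2) (Fin 2) ℂ := !![0, 1; 1, 0]
def sigmaY : Matrix (Fin 2) (Fin 2) ℂ := !![0, -Complex.I; Complex.I, 0]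
def sigmaZ : Matrix (Fin 2) (Fin 2) ℂ := !![1, 0; 0, -1]

/-- A linear map `Φ` on `M₂(ℂ)` is completely positive if `Φ ⊗ id_{Mₙ}` is
positivity preserving for every `n`. -/
def CompletelyPositive (Φ : Matrix (Fin 2) (Fin 2) ℂ →ₗ[ℂ] Matrix (Fin 2) (Fin 2) ℂ) : Prop :=
  ∀ (n : ℕ) (M : Matrix (Fin 2 × Fin n) (Fin 2 × Fin n) ℂ), M.PosSemidef →
    (Matrix.of fun p q : Fin 2 × Fin n =>
      Φ (Matrix.of fun i j : Fin 2 => M (i, p.2) (j, q.2)) p.1 q.1).PosSemidef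

theorem Matrix.PosSemidef.apply_mul_apply_le {𝕜 n : Type*} [RCLike 𝕜] [Fintype n]
    {A : Matrix n n 𝕜} (hA : A.PosSemidef) (i j : n) : A i j * A j i ≤ A i i * A j j := by
  have h := (hA.submatrix ![i, j]).det_nonneg
  rw [det_fin_two] at h
  simpa [sub_nonneg] using h

def choiMatrix {n R : Type*} [DecidableEq n] [Semiring R]
    (Φ : Matrix n n R →ₗ[R] Matrix n n R) : Matrix (n × n) (n × n) R :=
  of fun p q => Φ (single p.2 q.2 1) p.1 q.1

theorem CompletelyPositive.choiMatrix_posSemidef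
    {Φ : Matrix (Fin 2) (Fin 2) ℂ →ₗ[ℂ] Matrix (Fin 2) (Fin 2) ℂ} (hΦ : CompletelyPositive Φ) :
    (choiMatrix Φ).PosSemidef := by
  let ω : Fin 2 × Fin 2 → ℂ := fun p => if p.1 = p.2 then 1 else 0
  have hunit (a b : Fin 2) :
      (of fun i j => vecMulVec ω (star ω) (i, a) (j, b)) = single a b 1 := by
    ext i j
    simp only [ω, vecMulVec, of_apply, Pi.star_apply, RCLike.star_def,
      MonoidWithZeroHom.map_ite_one_zero, mul_ite, mul_one, mul_zero, single_apply]
    grind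
  have h := hΦ 2 _ (posSemidef_vecMulVec_self_star ω)
  simp only [hunit] at h
  exact h

theorem single_zero_zero_eq_pauli :
    (single 0 0 1 : Matrix (Fin 2) (Fin 2) ℂ) = (2⁻¹ : ℂ) • (1 + sigmaZ) := by
  ext i j; fin_cases i <;> fin_cases j <;> norm_num [sigmaZ]

theorem single_one_one_eq_pauli :
    (single 1 1 1 : Matrix (Fin 2) (Fin 2) ℂ) = (2⁻¹ : ℂ) • (1 - sigmaZ) := by
  ext i j; fin_cases i <;> fin_cases j <;> norm_num [sigmaZ]

theorem single_zero_one_eq_pauli :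
    (single 0 1 1 : Matrix (Fin 2) (Fin 2) ℂ) = (2⁻¹ : ℂ) • (sigmaX + Complex.I • sigmaY) := by
  ext i j; fin_cases i <;> fin_cases j <;> norm_num [sigmaX, sigmaY]

theorem single_one_zero_eq_pauli :
    (single 1 0 1 : Matrix (Fin 2) (Fin 2) ℂ) = (2⁻¹ : ℂ) • (sigmaX - Complex.I • sigmaY) := by
  ext i j; fin_cases i <;> fin_cases j <;> norm_num [sigmaX, sigmaY]

section PauliDiagonal

variable {l1 l2 l3 t3 : ℝ} {Φ : Matrix (Fin 2) (Fin 2) ℂ →ₗ[ℂ] Matrix (Fin 2) (Fin 2) ℂ}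

theorem map_single_zero_zero
    (hI : Φ 1 = 1 + (t3 : ℂ) • sigmaZ)
    (hz : Φ sigmaZ = (l3 : ℂ) • sigmaZ) :
    Φ (single 0 0 1) = !![(((1 + t3 + l3) / 2 : ℝ) : ℂ), 0; 0, (((1 - t3 - l3) / 2 : ℝ) : ℂ)] := by
  rw [single_zero_zero_eq_pauli, map_smul, map_add, hI, hz]
  ext i j; fin_cases i <;> fin_cases j <;> simp [sigmaZ] <;> ring

theorem map_single_one_one
    (hI : Φ 1 = 1 + (t3 : ℂ) • sigmaZ)
    (hz : Φ sigmaZ = (l3 : ℂ) • sigmaZ) :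
    Φ (single 1 1 1) = !![(((1 + t3 - l3) / 2 : ℝ) : ℂ), 0; 0, (((1 - t3 + l3) / 2 : ℝ) : ℂ)] := by
  rw [single_one_one_eq_pauli, map_smul, map_sub, hI, hz]
  ext i j; fin_cases i <;> fin_cases j <;> simp [sigmaZ] <;> ring

theorem map_single_zero_one
    (hx : Φ sigmaX = (l1 : ℂ) • sigmaX)
    (hy : Φ sigmaY = (l2 : ℂ) • sigmaY) :
    Φ (single 0 1 1) = !![0, (((l1 + l2) / 2 : ℝ) : ℂ); (((l1 - l2) / 2 : ℝ) : ℂ), 0] := by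
  rw [single_zero_one_eq_pauli, map_smul, map_add, map_smul, hx, hy]
  ext i j; fin_cases i <;> fin_cases j <;> simp [sigmaX, sigmaY, Complex.ext_iff] <;> ring

theorem map_single_one_zero
    (hx : Φ sigmaX = (l1 : ℂ) • sigmaX)
    (hy : Φ sigmaY = (l2 : ℂ) • sigmaY) :
    Φ (single 1 0 1) = !![0, (((l1 - l2) / 2 : ℝ) : ℂ); (((l1 + l2) / 2 : ℝ) : ℂ), 0] := by
  rw [single_one_zero_eq_pauli, map_smul, map_sub, map_smul, hx, hy]
  ext i j; fin_cases i <;> fin_cases j <;> simp [sigmaX, sigmaY, Complex.ext_iff] <;> ring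

end PauliDiagonal

theorem AF_conditions_of_completelyPositive_general (l1 l2 l3 t3 : ℝ)
    (Φ : Matrix (Fin 2) (Fin 2) ℂ →ₗ[ℂ] Matrix (Fin 2) (Fin 2) ℂ)
    (hI : Φ 1 = 1 + (t3 : ℂ) • sigmaZ)
    (hx : Φ sigmaX = (l1 : ℂ) • sigmaX)
    (hy : Φ sigmaY = (l2 : ℂ) • sigmaY)
    (hz : Φ sigmaZ = (l3 : ℂ) • sigmaZ)
    (hCP : CompletelyPositive Φ) :
    (l1 + l2) ^ 2 ≤ (1 + l3) ^ 2 - t3 ^ 2 ∧ (l1 - l2) ^ 2 ≤ (1 - l3) ^ 2 - t3 ^ 2 := by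
  have hC := hCP.choiMatrix_posSemidef
  have hsum := hC.apply_mul_apply_le (0, 0) (1, 1)
  have hdiff := hC.apply_mul_apply_le (0, 1) (1, 0)
  simp only [choiMatrix, of_apply, map_single_zero_zero hI hz, map_single_one_one hI hz,
    map_single_zero_one hx hy, map_single_one_zero hx hy, cons_val_zero, cons_val_one,
    cons_val_fin_one] at hsum hdiff
  norm_cast at hsum hdiff
  constructor <;> nlinarith

/-- The Algoet–Fujiwara conditions: complete positivity of a map with diagonal part
`diag(λ₁,λ₂,λ₃)` and translation `(0,0,t₃)`, with `|t₃| + |λ₃| < 1`, implies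
`(λ₁ ± λ₂)² ≤ (1 ± λ₃)² − t₃²`. -/
theorem AF_conditions_of_completelyPositive (l1 l2 l3 t3 : ℝ)
    (habs : |t3| + |l3| < 1)
    (Φ : Matrix (Fin 2) (Fin 2) ℂ →ₗ[ℂ] Matrix (Fin 2) (Fin 2) ℂ)
    (hI : Φ 1 = 1 + (t3 : ℂ) • sigmaZ)
    (hx : Φ sigmaX = (l1 : ℂ) • sigmaX)
    (hy : Φ sigmaY = (l2 : ℂ) • sigmaY)
    (hz : Φ sigmaZ = (l3 : ℂ) • sigmaZ)
    (hCP : CompletelyPositive Φ) :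
    (l1 + l2) ^ 2 ≤ (1 + l3) ^ 2 - t3 ^ 2 ∧ (l1 - l2) ^ 2 ≤ (1 - l3) ^ 2 - t3 ^ 2 :=
  AF_conditions_of_completelyPositive_general l1 l2 l3 t3 Φ hI hx hy hz hCP

end
end

section
/- Let λ₁, λ₂, λ₃ be real numbers and t = (t₁,t₂,t₃) ∈ ℝ³, and suppose the map Φ(w₀I + w·σ) = w₀I + (t + diag(λ₁,λ₂,λ₃)w)·σ is completely positive. Then [1 − (λ₁² + λ₂² + λ₃²) − (t₁² + t₂² + t₃²)]² ≥ 4[λ₁²(t₁² + λ₂²) + λ₂²(t₂² + λ₃²) + λ₃²(t₃² + λ₁²) − 2λ₁λ₂λ₃]. -/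
open Matrix
open scoped ComplexOrder

noncomputable section

theorem my_det_fin_four (A : Matrix (Fin 4) (Fin 4) ℂ) :
    A.det =
      A 0 0 * (A 1 1 * (A 2 2 * A 3 3 - A 2 3 * A 3 2) - A 1 2 * (A 2 1 * A 3 3 - A 2 3 * A 3 1) + A 1 3 * (A 2 1 * A 3 2 - A 2 2 * A 3 1))
    - A 0 1 * (A 1 0 * (A 2 2 * A 3 3 - A 2 3 * A 3 2) - A 1 2 * (A 2 0 * A 3 3 - A 2 3 * A 3 0) + A 1 3 * (A 2 0 * A 3 2 - A 2 2 * A 3 0))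
    + A 0 2 * (A 1 0 * (A 2 1 * A 3 3 - A 2 3 * A 3 1) - A 1 1 * (A 2 0 * A 3 3 - A 2 3 * A 3 0) + A 1 3 * (A 2 0 * A 3 1 - A 2 1 * A 3 0))
    - A 0 3 * (A 1 0 * (A 2 1 * A 3 2 - A 2 2 * A 3 1) - A 1 1 * (A 2 0 * A 3 2 - A 2 2 * A 3 0) + A 1 2 * (A 2 0 * A 3 1 - A 2 1 * A 3 0)) := by
  rw [Matrix.det_succ_row_zero, Fin.sum_univ_four]
  simp [Matrix.det_fin_three, Matrix.submatrix_apply, Fin.succAbove, Fin.lt_def,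
    show Fin.succ (2:Fin 3) = 3 from rfl, show Fin.succ (0:Fin 3) = 1 from rfl,
    show Fin.succ (1:Fin 3) = 2 from rfl,
    show ((3:Fin 4):ℕ) = 3 from rfl, show ((2:Fin 4):ℕ) = 2 from rfl,
    show ((1:Fin 4):ℕ) = 1 from rfl, show ((0:Fin 4):ℕ) = 0 from rfl,
    show (Fin.castSucc (2:Fin 3)) = (2:Fin 4) from rfl]
  norm_num
  ring

set_option maxHeartbeats 4000000 in
/-- The determinant condition: complete positivity of the map with Pauli-basis data
`T = diag(λ₁,λ₂,λ₃)`, `t = (t₁,t₂,t₃)` implies the stated quartic inequality. -/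
theorem det_condition_of_completelyPositive (l1 l2 l3 t1 t2 t3 : ℝ)
    (Φ : Matrix (Fin 2) (Fin 2) ℂ →ₗ[ℂ] Matrix (Fin 2) (Fin 2) ℂ)
    (hI : Φ 1 = 1 + (t1 : ℂ) • sigmaX + (t2 : ℂ) • sigmaY + (t3 : ℂ) • sigmaZ)
    (hx : Φ sigmaX = (l1 : ℂ) • sigmaX)
    (hy : Φ sigmaY = (l2 : ℂ) • sigmaY)
    (hz : Φ sigmaZ = (l3 : ℂ) • sigmaZ)
    (hCP : CompletelyPositive Φ) :
    (1 - (l1 ^ 2 + l2 ^ 2 + l3 ^ 2) - (t1 ^ 2 + t2 ^ 2 + t3 ^ 2)) ^ 2 ≥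
      4 * (l1 ^ 2 * (t1 ^ 2 + l2 ^ 2) + l2 ^ 2 * (t2 ^ 2 + l3 ^ 2) +
        l3 ^ 2 * (t3 ^ 2 + l1 ^ 2) - 2 * l1 * l2 * l3) := by
  -- the rank-one "maximally entangled" input matrix
  set A : Matrix (Fin 1) (Fin 2 × Fin 2) ℂ :=
    Matrix.of fun _ p => if p.1 = p.2 then 1 else 0 with hA
  set M : Matrix (Fin 2 × Fin 2) (Fin 2 × Fin 2) ℂ := Aᴴ * A with hM
  have hMpsd : M.PosSemidef := Matrix.posSemidef_conjTranspose_mul_self A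
  have hC := hCP 2 M hMpsd
  have hinner : ∀ k l i j : Fin 2,
      M (i, k) (j, l) = (if i = k then 1 else 0) * (if j = l then 1 else 0) := by
    intro k l i j
    simp [hM, hA, Matrix.mul_apply, Matrix.conjTranspose_apply, Fin.sum_univ_one,
      apply_ite (starRingEnd ℂ)]
  have h00 : (Matrix.of fun i j : Fin 2 => M (i, (0:Fin 2)) (j, (0:Fin 2)))
      = !![1,0;0,0] := by
    ext i j; fin_cases i <;> fin_cases j <;> simp [hinner]
  have h01 : (Matrix.of fun i j : Fin 2 => M (i, (0:Fin 2)) (j, (1:Fin 2)))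
      = !![0,1;0,0] := by
    ext i j; fin_cases i <;> fin_cases j <;> simp [hinner]
  have h10 : (Matrix.of fun i j : Fin 2 => M (i, (1:Fin 2)) (j, (0:Fin 2)))
      = !![0,0;1,0] := by
    ext i j; fin_cases i <;> fin_cases j <;> simp [hinner]
  have h11 : (Matrix.of fun i j : Fin 2 => M (i, (1:Fin 2)) (j, (1:Fin 2)))
      = !![0,0;0,1] := by
    ext i j; fin_cases i <;> fin_cases j <;> simp [hinner]
  -- values of Φ on the standard basis matrices
  have hP00 : Φ !![1,0;0,0] =
      !![(1+(t3:ℂ)+l3)/2, ((t1:ℂ) - t2*Complex.I)/2;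
         ((t1:ℂ) + t2*Complex.I)/2, (1-(t3:ℂ)-l3)/2] := by
    have hdec : (!![1,0;0,0] : Matrix (Fin 2) (Fin 2) ℂ) = (2:ℂ)⁻¹ • 1 + (2:ℂ)⁻¹ • sigmaZ := by
      ext i j; fin_cases i <;> fin_cases j <;> simp [sigmaZ, Matrix.one_apply] <;> norm_num
    rw [hdec, map_add, Φ.map_smul, Φ.map_smul, hI, hz]
    ext i j
    fin_cases i <;> fin_cases j <;>
      simp [sigmaX, sigmaY, sigmaZ, Matrix.one_apply] <;> ring
  have hP01 : Φ !![0,1;0,0] =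
      !![0, ((l1:ℂ)+l2)/2; ((l1:ℂ)-l2)/2, 0] := by
    have hdec : (!![0,1;0,0] : Matrix (Fin 2) (Fin 2) ℂ)
        = (2:ℂ)⁻¹ • sigmaX + (Complex.I/2) • sigmaY := by
      ext i j; fin_cases i <;> fin_cases j <;>
        simp [sigmaX, sigmaY] <;> ring_nf <;> simp [Complex.I_sq] <;> ring
    rw [hdec, map_add, Φ.map_smul, Φ.map_smul, hx, hy]
    ext i j
    fin_cases i <;> fin_cases j <;>
      simp [sigmaX, sigmaY] <;> ring_nf <;> simp [Complex.I_sq] <;> ring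
  have hP10 : Φ !![0,0;1,0] =
      !![0, ((l1:ℂ)-l2)/2; ((l1:ℂ)+l2)/2, 0] := by
    have hdec : (!![0,0;1,0] : Matrix (Fin 2) (Fin 2) ℂ)
        = (2:ℂ)⁻¹ • sigmaX - (Complex.I/2) • sigmaY := by
      ext i j; fin_cases i <;> fin_cases j <;>
        simp [sigmaX, sigmaY] <;> ring_nf <;> simp [Complex.I_sq] <;> ring
    rw [hdec, map_sub, Φ.map_smul, Φ.map_smul, hx, hy]
    ext i j
    fin_cases i <;> fin_cases j <;>
      simp [sigmaX, sigmaY] <;> ring_nf <;> simp [Complex.I_sq] <;> ring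
  have hP11 : Φ !![0,0;0,1] =
      !![(1+(t3:ℂ)-l3)/2, ((t1:ℂ) - t2*Complex.I)/2;
         ((t1:ℂ) + t2*Complex.I)/2, (1-(t3:ℂ)+l3)/2] := by
    have hdec : (!![0,0;0,1] : Matrix (Fin 2) (Fin 2) ℂ) = (2:ℂ)⁻¹ • 1 - (2:ℂ)⁻¹ • sigmaZ := by
      ext i j; fin_cases i <;> fin_cases j <;> simp [sigmaZ, Matrix.one_apply] <;> norm_num
    rw [hdec, map_sub, Φ.map_smul, Φ.map_smul, hI, hz]
    ext i j
    fin_cases i <;> fin_cases j <;>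
      simp [sigmaX, sigmaY, sigmaZ, Matrix.one_apply] <;> ring
  -- reindex the output as a 4×4 matrix
  set e : Fin 4 → Fin 2 × Fin 2 := ![(0,0),(0,1),(1,0),(1,1)] with he
  set Dexp : Matrix (Fin 4) (Fin 4) ℂ :=
    !![(1+(t3:ℂ)+l3)/2, 0, ((t1:ℂ) - t2*Complex.I)/2, ((l1:ℂ)+l2)/2;
       0, (1+(t3:ℂ)-l3)/2, ((l1:ℂ)-l2)/2, ((t1:ℂ) - t2*Complex.I)/2;
       ((t1:ℂ) + t2*Complex.I)/2, ((l1:ℂ)-l2)/2, (1-(t3:ℂ)-l3)/2, 0;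
       ((l1:ℂ)+l2)/2, ((t1:ℂ) + t2*Complex.I)/2, 0, (1-(t3:ℂ)+l3)/2] with hDexp
  have key : ∀ k l : Fin 2, Φ (Matrix.of fun i j : Fin 2 => M (i, k) (j, l)) =
      ![![Φ !![1,0;0,0], Φ !![0,1;0,0]], ![Φ !![0,0;1,0], Φ !![0,0;0,1]]] k l := by
    intro k l
    fin_cases k <;> fin_cases l <;>
      simp only [Fin.zero_eta, Fin.mk_one, Matrix.cons_val_zero, Matrix.cons_val_one,
        Matrix.head_cons] <;>
      simp only [h00, h01, h10, h11]
  have hsub : (Matrix.of fun p q : Fin 2 × Fin 2 =>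
      Φ (Matrix.of fun i j : Fin 2 => M (i, p.2) (j, q.2)) p.1 q.1).submatrix e e = Dexp := by
    ext i j
    fin_cases i <;> fin_cases j <;>
      simp only [Matrix.submatrix_apply, Matrix.of_apply] <;>
      rw [key] <;>
      simp [he, hDexp, hP00, hP01, hP10, hP11]
  have hDpsd : Dexp.PosSemidef := hsub ▸ hC.submatrix e
  -- determinant of the 4×4 matrix
  set r : ℝ := ((1 - (l1 ^ 2 + l2 ^ 2 + l3 ^ 2) - (t1 ^ 2 + t2 ^ 2 + t3 ^ 2)) ^ 2 -
      4 * (l1 ^ 2 * (t1 ^ 2 + l2 ^ 2) + l2 ^ 2 * (t2 ^ 2 + l3 ^ 2) +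
        l3 ^ 2 * (t3 ^ 2 + l1 ^ 2) - 2 * l1 * l2 * l3)) / 16 with hr
  have hdet : Dexp.det = (r : ℂ) := by
    rw [my_det_fin_four, hDexp, hr]
    simp [Complex.ext_iff, ← Complex.ofReal_pow]
    constructor <;> ring
  have hprod : Dexp.det = ((∏ i, hDpsd.1.eigenvalues i : ℝ) : ℂ) := by
    rw [hDpsd.1.det_eq_prod_eigenvalues]
    push_cast
    rfl
  have hnonneg : 0 ≤ ∏ i, hDpsd.1.eigenvalues i :=
    Finset.prod_nonneg fun i _ => hDpsd.eigenvalues_nonneg i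
  have hre : r = ∏ i, hDpsd.1.eigenvalues i := by
    have := hdet.symm.trans hprod
    exact_mod_cast this
  have hrnn : 0 ≤ r := hre ▸ hnonneg
  rw [hr] at hrnn
  nlinarith [hrnn]

end
end

section
/- For all t ∈ [0, π/2], h(cos t) + h(sin t) ≥ log 2, where h(s) = −((1+s)/2)·log((1+s)/2) − ((1−s)/2)·log((1−s)/2). -/
/-!
With `u = s²`, the function `u ↦ h(√u)` is concave on `[0, 1]`: its derivative is
`-(1/4) · (log (1 + √u) - log (1 - √u)) / √u = -(1/2) · ∑ uᵏ / (2k + 1)`, which is antitone.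
Comparing with the chord from `h(0) = log 2` to `h(1) = 0` gives `h(s) ≥ (1 - s²) log 2`
for `|s| ≤ 1`, and adding this at `s = cos t` and `s = sin t` gives `log 2`.
-/

noncomputable section

/-- The binary entropy function in the Bloch parameterization. -/
def binEnt (s : ℝ) : ℝ :=
  -((1 + s) / 2 * Real.log ((1 + s) / 2)) - (1 - s) / 2 * Real.log ((1 - s) / 2)

open Real Set

lemma hasSum_log_one_add_sub_log_one_sub_div {s : ℝ} (hs₀ : 0 < s) (hs₁ : s < 1) :
    HasSum (fun k : ℕ => 2 / (2 * k + 1) * s ^ (2 * k)) ((log (1 + s) - log (1 - s)) / s) := by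
  have hs : |s| < 1 := abs_lt.2 ⟨by linarith, hs₁⟩
  refine ((hasSum_log_sub_log_of_abs_lt_one hs).div_const s).congr_fun fun k => ?_
  field_simp
  ring

lemma monotoneOn_log_one_add_sub_log_one_sub_div :
    MonotoneOn (fun s => (log (1 + s) - log (1 - s)) / s) (Ioo 0 1) := fun s hs t ht hst =>
  hasSum_le (fun k => by gcongr; exact hs.1.le)
    (hasSum_log_one_add_sub_log_one_sub_div hs.1 hs.2)
    (hasSum_log_one_add_sub_log_one_sub_div ht.1 ht.2)

lemma binEnt_eq_binEntropy (s : ℝ) : binEnt s = binEntropy ((1 + s) / 2) := by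
  rw [binEntropy, log_inv, log_inv, show 1 - (1 + s) / 2 = (1 - s) / 2 by ring, binEnt]
  ring

lemma binEnt_neg (s : ℝ) : binEnt (-s) = binEnt s := by
  rw [binEnt, binEnt, ← sub_eq_add_neg, sub_neg_eq_add]
  ring

@[simp] lemma binEnt_zero : binEnt 0 = log 2 := by
  simp [binEnt_eq_binEntropy]

@[simp] lemma binEnt_one : binEnt 1 = 0 := by
  simp [binEnt_eq_binEntropy]

lemma continuous_binEnt : Continuous binEnt := by
  simp_rw [funext binEnt_eq_binEntropy]
  fun_prop

lemma hasDerivAt_binEnt {s : ℝ} (hs₀ : -1 < s) (hs₁ : s < 1) :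
    HasDerivAt binEnt (-(log (1 + s) - log (1 - s)) / 2) s := by
  have hp : HasDerivAt (fun s : ℝ => (1 + s) / 2) (1 / 2) s := by
    simpa using ((hasDerivAt_id s).const_add 1).div_const 2
  rw [show binEnt = binEntropy ∘ fun s => (1 + s) / 2 from funext binEnt_eq_binEntropy]
  refine ((hasDerivAt_binEntropy (by linarith) (by linarith)).comp s hp).congr_deriv ?_
  rw [show 1 - (1 + s) / 2 = (1 - s) / 2 by ring, log_div (by linarith) two_ne_zero,
    log_div (by linarith) two_ne_zero]
  ring

lemma hasDerivAt_binEnt_comp_sqrt {u : ℝ} (hu₀ : 0 < u) (hu₁ : u < 1) :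
    HasDerivAt (binEnt ∘ sqrt) (-((log (1 + √u) - log (1 - √u)) / √u) / 4) u := by
  have hs₀ : 0 < √u := sqrt_pos.2 hu₀
  have hs₁ : √u < 1 := (sqrt_lt' one_pos).2 (by rwa [one_pow])
  refine ((hasDerivAt_binEnt (by linarith) hs₁).comp u (hasDerivAt_sqrt hu₀.ne')).congr_deriv ?_
  field_simp
  ring

lemma concaveOn_binEnt_comp_sqrt : ConcaveOn ℝ (Icc 0 1) (binEnt ∘ sqrt) := by
  have hsqrt {u : ℝ} (hu : u ∈ Ioo 0 1) : √u ∈ Ioo 0 1 :=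
    ⟨sqrt_pos.2 hu.1, (sqrt_lt' one_pos).2 (by rw [one_pow]; exact hu.2)⟩
  refine AntitoneOn.concaveOn_of_deriv (convex_Icc 0 1)
    (continuous_binEnt.comp continuous_sqrt).continuousOn ?_ ?_ <;> rw [interior_Icc]
  · exact fun u hu =>
      (hasDerivAt_binEnt_comp_sqrt hu.1 hu.2).differentiableAt.differentiableWithinAt
  intro u hu v hv huv
  rw [(hasDerivAt_binEnt_comp_sqrt hu.1 hu.2).deriv, (hasDerivAt_binEnt_comp_sqrt hv.1 hv.2).deriv]
  have hmono := monotoneOn_log_one_add_sub_log_one_sub_div (hsqrt hu) (hsqrt hv) (sqrt_le_sqrt huv)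
  simp only at hmono
  linarith

lemma one_sub_sq_mul_log_two_le_binEnt {s : ℝ} (hs : |s| ≤ 1) :
    (1 - s ^ 2) * log 2 ≤ binEnt s := by
  have hs2 : s ^ 2 ∈ Icc (0 : ℝ) 1 := ⟨sq_nonneg s, sq_le_one_iff_abs_le_one s |>.2 hs⟩
  have key := concaveOn_binEnt_comp_sqrt.2 (left_mem_Icc.2 zero_le_one)
    (right_mem_Icc.2 zero_le_one) (sub_nonneg.2 hs2.2) hs2.1 (sub_add_cancel 1 (s ^ 2))
  have hsqrt : √(s ^ 2) = |s| := sqrt_sq_eq_abs s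
  have heven : binEnt |s| = binEnt s := by
    rcases abs_choice s with h | h <;> rw [h]
    exact binEnt_neg s
  simpa [hsqrt, heven] using key

theorem binEnt_cos_add_binEnt_sin_ge_general (t : ℝ) :
    binEnt (Real.cos t) + binEnt (Real.sin t) ≥ Real.log 2 := by
  have hcos := one_sub_sq_mul_log_two_le_binEnt (abs_cos_le_one t)
  have hsin := one_sub_sq_mul_log_two_le_binEnt (abs_sin_le_one t)
  linear_combination hcos + hsin + log 2 * sin_sq_add_cos_sq t

/-- For `t ∈ [0, π/2]`, `h(cos t) + h(sin t) ≥ log 2`. -/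
theorem binEnt_cos_add_binEnt_sin_ge (t : ℝ) (ht : t ∈ Set.Icc 0 (Real.pi / 2)) :
    binEnt (Real.cos t) + binEnt (Real.sin t) ≥ Real.log 2 :=
  binEnt_cos_add_binEnt_sin_ge_general t

end
end
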